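/- Let g > 0, D > 0, a < b, and let η, u : [a,b] × [0,T] → ℝ be smooth functions solving the BBM-BBM system η_t + ((D+η)u)_x − (D²/6)η_{xxt} = 0, u_t + g η_x + u u_x − (D²/6)u_{xxt} = 0 on [a,b] × [0,T], subject to the reflective boundary conditions η_x(a,t) = η_x(b,t) = 0 and u(a,t) = u(b,t) = 0 for all t ∈ [0,T]. Then the total energy E(t) = (1/2) ∫_a^b ( g η² + (D+η) u² ) dx is constant in t on [0,T]. -/

import Mathlib

open MeasureTheory Filter Set

/-- Partial derivative with respect to the first (spatial) variable. -/
noncomputable def pdx (f : ℝ → ℝ → ℝ) : ℝ → ℝ → ℝ := fun x t => deriv (fun y => f y t) x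

/-- Partial derivative with respect to the second (temporal) variable. -/
noncomputable def pdt (f : ℝ → ℝ → ℝ) : ℝ → ℝ → ℝ := fun x t => deriv (fun s => f x s) t

/-- `(η, u)` solves the BBM-BBM system with gravity `g` and depth `D` on `[a,b] × [0, T]`:
`η_t + ((D+η)u)_x − (D²/6)η_{xxt} = 0`, `u_t + g η_x + u u_x − (D²/6)u_{xxt} = 0`. -/
def IsBBMSolutionOn (g D a b T : ℝ) (η u : ℝ → ℝ → ℝ) : Prop :=
  ∀ x ∈ Set.Icc a b, ∀ t ∈ Set.Icc (0 : ℝ) T,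
    pdt η x t + pdx (fun y s => (D + η y s) * u y s) x t
      - D ^ 2 / 6 * pdt (pdx (pdx η)) x t = 0 ∧
    pdt u x t + g * pdx η x t + u x t * pdx u x t
      - D ^ 2 / 6 * pdt (pdx (pdx u)) x t = 0

section helpers

variable {f : ℝ → ℝ → ℝ} {x t : ℝ}

lemma hasDerivAt_slice_fst (hf : DifferentiableAt ℝ (fun p : ℝ × ℝ => f p.1 p.2) (x, t)) :
    HasDerivAt (fun y => f y t) (fderiv ℝ (fun p : ℝ × ℝ => f p.1 p.2) (x, t) (1, 0)) x := by
  have h1 : HasDerivAt (fun y : ℝ => (y, t)) ((1 : ℝ), (0 : ℝ)) x :=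
    (hasDerivAt_id x).prodMk (hasDerivAt_const x t)
  exact hf.hasFDerivAt.comp_hasDerivAt x h1

lemma hasDerivAt_slice_snd (hf : DifferentiableAt ℝ (fun p : ℝ × ℝ => f p.1 p.2) (x, t)) :
    HasDerivAt (fun s => f x s) (fderiv ℝ (fun p : ℝ × ℝ => f p.1 p.2) (x, t) (0, 1)) t := by
  have h1 : HasDerivAt (fun s : ℝ => (x, s)) ((0 : ℝ), (1 : ℝ)) t :=
    (hasDerivAt_const t x).prodMk (hasDerivAt_id t)
  exact hf.hasFDerivAt.comp_hasDerivAt t h1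

lemma pdx_eq_fderiv (hf : DifferentiableAt ℝ (fun p : ℝ × ℝ => f p.1 p.2) (x, t)) :
    pdx f x t = fderiv ℝ (fun p : ℝ × ℝ => f p.1 p.2) (x, t) (1, 0) :=
  (hasDerivAt_slice_fst hf).deriv

lemma pdt_eq_fderiv (hf : DifferentiableAt ℝ (fun p : ℝ × ℝ => f p.1 p.2) (x, t)) :
    pdt f x t = fderiv ℝ (fun p : ℝ × ℝ => f p.1 p.2) (x, t) (0, 1) :=
  (hasDerivAt_slice_snd hf).deriv

lemma hasDerivAt_pdx (hf : DifferentiableAt ℝ (fun p : ℝ × ℝ => f p.1 p.2) (x, t)) :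
    HasDerivAt (fun y => f y t) (pdx f x t) x :=
  (hasDerivAt_slice_fst hf).differentiableAt.hasDerivAt

lemma hasDerivAt_pdt (hf : DifferentiableAt ℝ (fun p : ℝ × ℝ => f p.1 p.2) (x, t)) :
    HasDerivAt (fun s => f x s) (pdt f x t) t :=
  (hasDerivAt_slice_snd hf).differentiableAt.hasDerivAt

lemma contDiff_pd_aux (hf : ContDiff ℝ (⊤ : ℕ∞) (fun p : ℝ × ℝ => f p.1 p.2)) (v : ℝ × ℝ) :
    ContDiff ℝ (⊤ : ℕ∞) (fun p : ℝ × ℝ => fderiv ℝ (fun q : ℝ × ℝ => f q.1 q.2) p v) := by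
  exact (ContinuousLinearMap.apply ℝ ℝ v).contDiff.comp (hf.fderiv_right (by simp))

lemma contDiff_pdx (hf : ContDiff ℝ (⊤ : ℕ∞) (fun p : ℝ × ℝ => f p.1 p.2)) :
    ContDiff ℝ (⊤ : ℕ∞) (fun p : ℝ × ℝ => pdx f p.1 p.2) := by
  have h : (fun p : ℝ × ℝ => pdx f p.1 p.2)
      = fun p : ℝ × ℝ => fderiv ℝ (fun q : ℝ × ℝ => f q.1 q.2) p (1, 0) := by
    funext p
    have := pdx_eq_fderiv (f := f) (x := p.1) (t := p.2)
      ((hf.differentiable (by simp)) (p.1, p.2))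
    simpa using this
  rw [h]; exact contDiff_pd_aux hf _

lemma contDiff_pdt (hf : ContDiff ℝ (⊤ : ℕ∞) (fun p : ℝ × ℝ => f p.1 p.2)) :
    ContDiff ℝ (⊤ : ℕ∞) (fun p : ℝ × ℝ => pdt f p.1 p.2) := by
  have h : (fun p : ℝ × ℝ => pdt f p.1 p.2)
      = fun p : ℝ × ℝ => fderiv ℝ (fun q : ℝ × ℝ => f q.1 q.2) p (0, 1) := by
    funext p
    have := pdt_eq_fderiv (f := f) (x := p.1) (t := p.2)
      ((hf.differentiable (by simp)) (p.1, p.2))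
    simpa using this
  rw [h]; exact contDiff_pd_aux hf _

lemma pdx_pdt_comm (hf : ContDiff ℝ (⊤ : ℕ∞) (fun p : ℝ × ℝ => f p.1 p.2)) :
    pdx (pdt f) x t = pdt (pdx f) x t := by
  set F : ℝ × ℝ → ℝ := fun p => f p.1 p.2 with hF
  set F' : ℝ × ℝ → (ℝ × ℝ) →L[ℝ] ℝ := fderiv ℝ F with hF'
  have hdF : Differentiable ℝ F := hf.differentiable (by simp)
  have hdF' : Differentiable ℝ F' := (hf.fderiv_right (m := (⊤ : ℕ∞)) (by simp)).differentiable (by simp)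
  set F'' : (ℝ × ℝ) →L[ℝ] (ℝ × ℝ) →L[ℝ] ℝ := fderiv ℝ F' (x, t) with hF''
  have hsymm : ∀ v w, F'' v w = F'' w v :=
    second_derivative_symmetric (fun y => (hdF y).hasFDerivAt) ((hdF' (x, t)).hasFDerivAt)
  have h1 : HasDerivAt (fun y => F' (y, t)) (F'' (1, 0)) x := by
    have hy : HasDerivAt (fun y : ℝ => (y, t)) ((1 : ℝ), (0 : ℝ)) x :=
      (hasDerivAt_id x).prodMk (hasDerivAt_const x t)
    exact (hdF' (x, t)).hasFDerivAt.comp_hasDerivAt x hy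
  have h1' : HasDerivAt (fun y => F' (y, t) (0, 1)) (F'' (1, 0) (0, 1)) x :=
    (ContinuousLinearMap.apply ℝ ℝ ((0 : ℝ), (1 : ℝ))).hasFDerivAt.comp_hasDerivAt x h1
  have h2 : HasDerivAt (fun s => F' (x, s)) (F'' (0, 1)) t := by
    have hy : HasDerivAt (fun s : ℝ => (x, s)) ((0 : ℝ), (1 : ℝ)) t :=
      (hasDerivAt_const t x).prodMk (hasDerivAt_id t)
    exact (hdF' (x, t)).hasFDerivAt.comp_hasDerivAt t hy
  have h2' : HasDerivAt (fun s => F' (x, s) (1, 0)) (F'' (0, 1) (1, 0)) t :=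
    (ContinuousLinearMap.apply ℝ ℝ ((1 : ℝ), (0 : ℝ))).hasFDerivAt.comp_hasDerivAt t h2
  have e1 : pdx (pdt f) x t = F'' (1, 0) (0, 1) := by
    have heq : (fun y => pdt f y t) = fun y => F' (y, t) (0, 1) := by
      funext y; exact pdt_eq_fderiv (hdF (y, t))
    show deriv (fun y => pdt f y t) x = _
    rw [heq]; exact h1'.deriv
  have e2 : pdt (pdx f) x t = F'' (0, 1) (1, 0) := by
    have heq : (fun s => pdx f x s) = fun s => F' (x, s) (1, 0) := by
      funext s; exact pdx_eq_fderiv (hdF (x, s))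
    show deriv (fun s => pdx f x s) t = _
    rw [heq]; exact h2'.deriv
  rw [e1, e2, hsymm]

end helpers

/-- Time derivative of the energy density. -/
noncomputable def eDt (g D : ℝ) (η u : ℝ → ℝ → ℝ) : ℝ → ℝ → ℝ := fun x t =>
  2 * g * η x t * pdt η x t + pdt η x t * u x t ^ 2
    + 2 * (D + η x t) * u x t * pdt u x t

/-- Spatial flux whose divergence is the time derivative of the energy density. -/
noncomputable def flux (g D : ℝ) (η u : ℝ → ℝ → ℝ) : ℝ → ℝ → ℝ := fun x t =>
  (-(2 * g)) * (η x t * ((D + η x t) * u x t))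
    - (D + η x t) * u x t ^ 3
    + (2 * (D ^ 2 / 6) * g) * (η x t * pdx (pdt η) x t)
    + (D ^ 2 / 6) * (u x t ^ 2 * pdx (pdt η) x t)
    + (2 * (D ^ 2 / 6)) * ((D + η x t) * (u x t * pdx (pdt u) x t))
    + (2 * (D ^ 2 / 6)) * (pdt η x t * pdt u x t)
    - (2 * (D ^ 2 / 6) ^ 2) * (pdx (pdt η) x t * pdx (pdt u) x t)

section main

variable {g D a b T : ℝ} {η u : ℝ → ℝ → ℝ}

lemma eDt_hasDerivAt (hη : ContDiff ℝ (⊤ : ℕ∞) (fun p : ℝ × ℝ => η p.1 p.2))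
    (hu : ContDiff ℝ (⊤ : ℕ∞) (fun p : ℝ × ℝ => u p.1 p.2)) (x t : ℝ) :
    HasDerivAt (fun s => g * η x s ^ 2 + (D + η x s) * u x s ^ 2) (eDt g D η u x t) t := by
  have he := hasDerivAt_pdt (f := η) ((hη.differentiable (by simp)) (x, t))
  have hw := hasDerivAt_pdt (f := u) ((hu.differentiable (by simp)) (x, t))
  have h := ((he.pow 2).const_mul g).add ((he.const_add D).mul (hw.pow 2))
  refine h.congr_deriv (Eq.symm ?_)
  simp only [eDt, Pi.pow_apply, Pi.mul_apply]; push_cast; ring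

lemma eDt_continuous (hη : ContDiff ℝ (⊤ : ℕ∞) (fun p : ℝ × ℝ => η p.1 p.2))
    (hu : ContDiff ℝ (⊤ : ℕ∞) (fun p : ℝ × ℝ => u p.1 p.2)) :
    Continuous (fun p : ℝ × ℝ => eDt g D η u p.1 p.2) := by
  have cη := hη.continuous
  have cu := hu.continuous
  have cP := (contDiff_pdt hη).continuous
  have cQ := (contDiff_pdt hu).continuous
  simp only [eDt]
  fun_prop

lemma flux_hasDerivAt
    (hη : ContDiff ℝ (⊤ : ℕ∞) (fun p : ℝ × ℝ => η p.1 p.2))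
    (hu : ContDiff ℝ (⊤ : ℕ∞) (fun p : ℝ × ℝ => u p.1 p.2))
    (hsol : IsBBMSolutionOn g D a b T η u)
    {x t : ℝ} (hx : x ∈ Set.Icc a b) (ht : t ∈ Set.Icc (0 : ℝ) T) :
    HasDerivAt (fun y => flux g D η u y t) (eDt g D η u x t) x := by
  have hPc := contDiff_pdt hη
  have hQc := contDiff_pdt hu
  have hMc := contDiff_pdx hPc
  have hNc := contDiff_pdx hQc
  have dη := hasDerivAt_pdx (f := η) ((hη.differentiable (by simp)) (x, t))
  have du := hasDerivAt_pdx (f := u) ((hu.differentiable (by simp)) (x, t))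
  have dP := hasDerivAt_pdx (f := pdt η) ((hPc.differentiable (by simp)) (x, t))
  have dQ := hasDerivAt_pdx (f := pdt u) ((hQc.differentiable (by simp)) (x, t))
  have dM := hasDerivAt_pdx (f := pdx (pdt η)) ((hMc.differentiable (by simp)) (x, t))
  have dN := hasDerivAt_pdx (f := pdx (pdt u)) ((hNc.differentiable (by simp)) (x, t))
  have big := (((((((dη.mul ((dη.const_add D).mul du)).const_mul (-(2 * g))).sub
      ((dη.const_add D).mul (du.pow 3))).add
      ((dη.mul dM).const_mul (2 * (D ^ 2 / 6) * g))).add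
      (((du.pow 2).mul dM).const_mul (D ^ 2 / 6))).add
      (((dη.const_add D).mul (du.mul dN)).const_mul (2 * (D ^ 2 / 6)))).add
      ((dP.mul dQ).const_mul (2 * (D ^ 2 / 6)))).sub
      ((dM.mul dN).const_mul (2 * (D ^ 2 / 6) ^ 2))
  simp only [flux]
  refine big.congr_deriv (Eq.symm ?_)
  obtain ⟨e1, e2⟩ := hsol x hx t ht
  have hflux : pdx (fun y s => (D + η y s) * u y s) x t
      = pdx η x t * u x t + (D + η x t) * pdx u x t :=
    ((dη.const_add D).mul du).deriv
  have hcη : pdt (pdx (pdx η)) x t = pdx (pdx (pdt η)) x t := by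
    have h1 : pdt (pdx (pdx η)) x t = pdx (pdt (pdx η)) x t :=
      (pdx_pdt_comm (contDiff_pdx hη)).symm
    have h2 : pdt (pdx η) = pdx (pdt η) :=
      funext fun y => funext fun s => (pdx_pdt_comm (x := y) (t := s) hη).symm
    rw [h1, h2]
  have hcu : pdt (pdx (pdx u)) x t = pdx (pdx (pdt u)) x t := by
    have h1 : pdt (pdx (pdx u)) x t = pdx (pdt (pdx u)) x t :=
      (pdx_pdt_comm (contDiff_pdx hu)).symm
    have h2 : pdt (pdx u) = pdx (pdt u) :=
      funext fun y => funext fun s => (pdx_pdt_comm (x := y) (t := s) hu).symm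
    rw [h1, h2]
  rw [hflux, hcη] at e1
  rw [hcu] at e2
  simp only [eDt, Pi.pow_apply, Pi.mul_apply]
  push_cast
  linear_combination (2 * g * η x t + u x t ^ 2 - 2 * (D ^ 2 / 6) * pdx (pdt u) x t) * e1
    + (2 * (D + η x t) * u x t - 2 * (D ^ 2 / 6) * pdx (pdt η) x t) * e2

lemma flux_eq_zero
    (hη : ContDiff ℝ (⊤ : ℕ∞) (fun p : ℝ × ℝ => η p.1 p.2))
    {x₀ t T : ℝ} (hT : 0 < T) (ht : t ∈ Set.Ioo (0 : ℝ) T)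
    (hbu : ∀ s ∈ Set.Icc (0 : ℝ) T, u x₀ s = 0)
    (hbη : ∀ s ∈ Set.Icc (0 : ℝ) T, pdx η x₀ s = 0) :
    flux g D η u x₀ t = 0 := by
  have hu0 : u x₀ t = 0 := hbu t (Ioo_subset_Icc_self ht)
  have hM0 : pdx (pdt η) x₀ t = 0 := by
    have hev : (fun s => pdx η x₀ s) =ᶠ[nhds t] fun _ => (0 : ℝ) := by
      filter_upwards [isOpen_Ioo.mem_nhds ht] with s hs
      exact hbη s (Ioo_subset_Icc_self hs)
    calc pdx (pdt η) x₀ t = pdt (pdx η) x₀ t := pdx_pdt_comm hη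
      _ = deriv (fun _ => (0 : ℝ)) t := hev.deriv_eq
      _ = 0 := deriv_const t 0
  have hQ0 : pdt u x₀ t = 0 := by
    have hev : (fun s => u x₀ s) =ᶠ[nhds t] fun _ => (0 : ℝ) := by
      filter_upwards [isOpen_Ioo.mem_nhds ht] with s hs
      exact hbu s (Ioo_subset_Icc_self hs)
    calc pdt u x₀ t = deriv (fun _ => (0 : ℝ)) t := hev.deriv_eq
      _ = 0 := deriv_const t 0
  simp only [flux, hu0, hM0, hQ0]
  ring

end main


/-- Conservation of the total energy `E(t) = (1/2) ∫_a^b ( g η² + (D+η) u² ) dx` for the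
BBM-BBM system on `[a,b]` with reflective (Neumann–Dirichlet) boundary conditions. -/
theorem energy_conservation_reflective_bbm
    (g D a b T : ℝ) (hg : 0 < g) (hD : 0 < D) (hab : a < b)
    (η u : ℝ → ℝ → ℝ)
    (hη : ContDiff ℝ (⊤ : ℕ∞) (fun p : ℝ × ℝ => η p.1 p.2))
    (hu : ContDiff ℝ (⊤ : ℕ∞) (fun p : ℝ × ℝ => u p.1 p.2))
    (hsol : IsBBMSolutionOn g D a b T η u)
    (hbcη : ∀ t ∈ Set.Icc (0 : ℝ) T, pdx η a t = 0 ∧ pdx η b t = 0)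
    (hbcu : ∀ t ∈ Set.Icc (0 : ℝ) T, u a t = 0 ∧ u b t = 0) :
    ∀ t₁ ∈ Set.Icc (0 : ℝ) T, ∀ t₂ ∈ Set.Icc (0 : ℝ) T,
      (1 / 2) * (∫ x in a..b, (g * η x t₁ ^ 2 + (D + η x t₁) * u x t₁ ^ 2))
        = (1 / 2) * ∫ x in a..b, (g * η x t₂ ^ 2 + (D + η x t₂) * u x t₂ ^ 2) := by
  intro t₁ ht₁ t₂ ht₂
  have hT0 : (0 : ℝ) ≤ T := le_trans ht₁.1 ht₁.2
  rcases eq_or_lt_of_le hT0 with hT | hT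
  · have h1 : t₁ = 0 := le_antisymm (hT ▸ ht₁.2) ht₁.1
    have h2 : t₂ = 0 := le_antisymm (hT ▸ ht₂.2) ht₂.1
    rw [h1, h2]
  · -- main case 0 < T
    set Φ : ℝ → ℝ := fun s => ∫ x in a..b, (g * η x s ^ 2 + (D + η x s) * u x s ^ 2) with hΦdef
    have cI : Continuous (fun p : ℝ × ℝ =>
        g * η p.1 p.2 ^ 2 + (D + η p.1 p.2) * u p.1 p.2 ^ 2) := by
      have cη := hη.continuous
      have cu := hu.continuous
      fun_prop
    have cIt := eDt_continuous (g := g) (D := D) hη hu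
    -- derivative of Φ at every time
    have key_deriv : ∀ t : ℝ, HasDerivAt Φ (∫ x in a..b, eDt g D η u x t) t := by
      intro t
      obtain ⟨C, hC⟩ := ((isCompact_Icc (a := a) (b := b)).prod
        (isCompact_Icc (a := t - 1) (b := t + 1))).exists_bound_of_continuousOn
        cIt.continuousOn
      have H := intervalIntegral.hasDerivAt_integral_of_dominated_loc_of_deriv_le
        (μ := volume) (F := fun s x => g * η x s ^ 2 + (D + η x s) * u x s ^ 2)
        (F' := fun s x => eDt g D η u x s) (x₀ := t) (s := Metric.ball t 1) (bound := fun _ => C)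
        (Metric.ball_mem_nhds t one_pos)
        (Eventually.of_forall fun s =>
          ((cI.comp (continuous_id.prodMk continuous_const)).aestronglyMeasurable))
        ((cI.comp (continuous_id.prodMk continuous_const)).intervalIntegrable a b)
        ((cIt.comp (continuous_id.prodMk continuous_const)).aestronglyMeasurable)
        (ae_of_all _ fun x hx s hs => by
          have hxab : x ∈ Set.Icc a b := by
            rw [uIoc_of_le hab.le] at hx; exact Ioc_subset_Icc_self hx
          have hst : s ∈ Set.Icc (t - 1) (t + 1) := by
            rw [Metric.mem_ball, Real.dist_eq] at hs
            constructor <;> [linarith [abs_lt.mp hs]; linarith [abs_lt.mp hs]]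
          exact hC (x, s) ⟨hxab, hst⟩)
        intervalIntegrable_const
        (ae_of_all _ fun x hx s hs => eDt_hasDerivAt hη hu x s)
      exact H.2
    have hΦcont : Continuous Φ :=
      continuous_iff_continuousAt.mpr fun s => (key_deriv s).continuousAt
    -- the derivative vanishes on (0, T)
    have hzero : ∀ t ∈ Set.Ioo (0 : ℝ) T, (∫ x in a..b, eDt g D η u x t) = 0 := by
      intro t ht
      have htIcc : t ∈ Set.Icc (0 : ℝ) T := Ioo_subset_Icc_self ht
      have hInt : IntervalIntegrable (fun x => eDt g D η u x t) volume a b :=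
        (cIt.comp (continuous_id.prodMk continuous_const)).intervalIntegrable a b
      have hFTC := intervalIntegral.integral_eq_sub_of_hasDerivAt
        (f := fun y => flux g D η u y t) (f' := fun x => eDt g D η u x t)
        (fun x hx => flux_hasDerivAt hη hu hsol
          (by rwa [uIcc_of_le hab.le] at hx) htIcc) hInt
      rw [hFTC]
      show flux g D η u b t - flux g D η u a t = 0
      rw [
        flux_eq_zero hη hT ht (fun s hs => (hbcu s hs).2) (fun s hs => (hbcη s hs).2),
        flux_eq_zero hη hT ht (fun s hs => (hbcu s hs).1) (fun s hs => (hbcη s hs).1),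
        sub_zero]
    have hΦ0 : ∀ s ∈ Set.Ioo (0 : ℝ) T, HasDerivAt Φ 0 s := fun s hs =>
      hzero s hs ▸ key_deriv s
    -- Φ is constant on (0,T)
    have hpair : ∀ p ∈ Set.Ioo (0 : ℝ) T, ∀ q ∈ Set.Ioo (0 : ℝ) T, p ≤ q → Φ q = Φ p := by
      intro p hp q hq hpq
      have := constant_of_has_deriv_right_zero (f := Φ) (a := p) (b := q)
        hΦcont.continuousOn
        (fun x hx => (hΦ0 x ⟨lt_of_lt_of_le hp.1 hx.1, hx.2.trans hq.2⟩).hasDerivWithinAt)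
      exact this q (right_mem_Icc.mpr hpq)
    have hT2 : T / 2 ∈ Set.Ioo (0 : ℝ) T := ⟨half_pos hT, half_lt_self hT⟩
    have hconst : Set.EqOn Φ (fun _ => Φ (T / 2)) (Set.Ioo (0 : ℝ) T) := by
      intro s hs
      rcases le_total s (T / 2) with h | h
      · exact (hpair s hs (T / 2) hT2 h).symm
      · exact hpair (T / 2) hT2 s hs h
    have hclosure : Set.EqOn Φ (fun _ => Φ (T / 2)) (Set.Icc (0 : ℝ) T) := by
      have := hconst.closure hΦcont continuous_const
      rwa [closure_Ioo hT.ne] at this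
    have : Φ t₁ = Φ t₂ := (hclosure ht₁).trans (hclosure ht₂).symm
    exact congrArg (fun z => (1 / 2 : ℝ) * z) this
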